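/- arXiv:1606.07646 — 5 statements merged into one kernel-verified Lean document; each statement's English description precedes it below -/
import Mathlib

section
/- Let x_j : ℝ → ℝ³ be a continuous, globally bounded, strictly sub-luminal trajectory. Then for every (t, x) ∈ ℝ × ℝ³ there exists exactly one advanced light-cone time, i.e. a unique t⁺ ∈ ℝ satisfying t⁺ = t + ‖x − x_j(t⁺)‖, and exactly one retarded light-cone time, i.e. a unique t⁻ ∈ ℝ satisfying t⁻ = t − ‖x − x_j(t⁻)‖. -/
/-!
Both light-cone equations are fixed-point equations `s = φ (xj s)` with `φ = t ± ‖x - ·‖`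
1-Lipschitz. Since `xj` is strictly sub-luminal, `g = φ ∘ xj` strictly shrinks distances on `ℝ`,
so it has at most one fixed point; since `g` is bounded, `s - g s` changes sign and the
intermediate value theorem yields one.
-/

open Set Bornology

theorem existsUnique_eq_of_dist_lt {g : ℝ → ℝ} (hbdd : IsBounded (range g))
    (hg : ∀ a b, a ≠ b → dist (g a) (g b) < dist a b) : ∃! s, s = g s := by
  obtain ⟨M, hM⟩ := isBounded_iff_forall_norm_le.1 hbdd
  have hgM (s : ℝ) : |g s| ≤ M := hM _ (mem_range_self s)
  have hM₀ : 0 ≤ M := (abs_nonneg _).trans (hgM 0)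
  have hcont : Continuous g :=
    (LipschitzWith.of_dist_le_mul (K := 1) fun a b => by
      rcases eq_or_ne a b with rfl | hab
      · simp
      · simpa using (hg a b hab).le).continuous
  obtain ⟨s, -, hs⟩ : ∃ s ∈ Icc (-M) M, s - g s = 0 :=
    intermediate_value_Icc (f := fun s => s - g s) (by linarith) (by fun_prop)
      ⟨by linarith [(abs_le.1 (hgM (-M))).1], by linarith [(abs_le.1 (hgM M)).2]⟩
  have hs : s = g s := sub_eq_zero.1 hs
  refine ⟨s, hs, fun s' hs' => by_contra fun hne => ?_⟩
  have hlt := hg s' s hne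
  rw [← hs', ← hs] at hlt
  exact hlt.false

theorem existsUnique_eq_comp_of_dist_lt {E : Type*} [PseudoMetricSpace E] {f : ℝ → E}
    (hbdd : IsBounded (range f)) (hf : ∀ a b, a ≠ b → dist (f a) (f b) < dist a b)
    {φ : E → ℝ} (hφ : LipschitzWith 1 φ) : ∃! s, s = φ (f s) :=
  existsUnique_eq_of_dist_lt (range_comp φ f ▸ hφ.isBounded_image hbdd)
    fun a b hab => (hφ.dist_le_mul _ _).trans_lt (by simpa using hf a b hab)

section

variable {E : Type*} [PseudoMetricSpace E]

theorem lipschitzWith_const_add_dist (t : ℝ) (x : E) : LipschitzWith 1 fun y => t + dist x y :=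
  LipschitzWith.of_dist_le_mul fun y z => by
    rw [dist_add_left]
    exact (LipschitzWith.dist_right x).dist_le_mul y z

theorem lipschitzWith_const_sub_dist (t : ℝ) (x : E) : LipschitzWith 1 fun y => t - dist x y :=
  LipschitzWith.of_dist_le_mul fun y z => by
    rw [dist_sub_left]
    exact (LipschitzWith.dist_right x).dist_le_mul y z

end

theorem stmt_0_general (xj : ℝ → EuclideanSpace ℝ (Fin 3))
    (hbdd : Bornology.IsBounded (Set.range xj))
    (hsub : ∀ a b : ℝ, a ≠ b → ‖xj a - xj b‖ < |a - b|)
    (t : ℝ) (x : EuclideanSpace ℝ (Fin 3)) :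
    (∃! tp : ℝ, tp = t + ‖x - xj tp‖) ∧ (∃! tm : ℝ, tm = t - ‖x - xj tm‖) := by
  have hsub' : ∀ a b, a ≠ b → dist (xj a) (xj b) < dist a b := by
    simpa only [dist_eq_norm, Real.norm_eq_abs] using hsub
  simp_rw [← dist_eq_norm]
  exact ⟨existsUnique_eq_comp_of_dist_lt hbdd hsub' (lipschitzWith_const_add_dist t x),
    existsUnique_eq_comp_of_dist_lt hbdd hsub' (lipschitzWith_const_sub_dist t x)⟩

/-- For a continuous, globally bounded, strictly sub-luminal trajectory
`xj : ℝ → ℝ³`, every spacetime point `(t, x)` has a unique advanced light-cone time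
and a unique retarded light-cone time. -/
theorem stmt_0 (xj : ℝ → EuclideanSpace ℝ (Fin 3))
    (hcont : Continuous xj)
    (hbdd : Bornology.IsBounded (Set.range xj))
    (hsub : ∀ a b : ℝ, a ≠ b → ‖xj a - xj b‖ < |a - b|)
    (t : ℝ) (x : EuclideanSpace ℝ (Fin 3)) :
    (∃! tp : ℝ, tp = t + ‖x - xj tp‖) ∧ (∃! tm : ℝ, tm = t - ‖x - xj tm‖) :=
  stmt_0_general xj hbdd hsub t x
end

section
/- Let x_j be a continuous, globally bounded, strictly sub-luminal trajectory with advanced light-cone time t⁺(t,x) and advanced delay function φ(t,x). Let (t₀, x₀) satisfy φ(t₀, x₀) > 0, set s₀ = t⁺(t₀, x₀), and assume x_j is continuously differentiable on a neighborhood of s₀ with ‖x_j′‖ < 1 there; write v = x_j′(s₀) and n̂ = (x₀ − x_j(s₀))/φ(t₀, x₀). Then φ is differentiable at (t₀, x₀), its spatial gradient is ∇φ(t₀, x₀) = n̂ / (1 + ⟪n̂, v⟫), and its time derivative is ∂φ/∂t(t₀, x₀) = −⟪n̂, v⟫ / (1 + ⟪n̂, v⟫) = ‖∇φ(t₀, x₀)‖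 − 1. -/
/-!
The advanced time `t⁺(t, x)` is the unique zero in `s` of the light-cone defect
`F((t, x), s) = s - t - ‖x - x_j(s)‖`; uniqueness follows from sub-luminality. Near `s₀` the defect
is strictly differentiable with `∂F/∂s = 1 + ⟪n̂, v⟫ > 0`, so the implicit function theorem makes
`t⁺` strictly differentiable with derivative `(dt, dx) ↦ (dt + ⟪n̂, dx⟫) / (1 + ⟪n̂, v⟫)`, and
`φ = t⁺ - t` inherits the stated gradient and time derivative.
-/

open scoped RealInnerProductSpace
open ContinuousLinearMap Filter

theorem HasStrictFDerivAt.hasStrictFDerivAt_of_apply_eq_iff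
    {𝕜 E : Type*} [NontriviallyNormedField 𝕜] [NormedAddCommGroup E] [NormedSpace 𝕜 E]
    [CompleteSpace 𝕜] [CompleteSpace E] {f : E × 𝕜 → 𝕜} {f' : E × 𝕜 →L[𝕜] 𝕜} {τ : E → 𝕜}
    {p₀ : E} {c : 𝕜}
    (hf : HasStrictFDerivAt f f' (p₀, τ p₀)) (hf₂ : f' (0, 1) ≠ 0)
    (hτ : ∀ p s, f (p, s) = c ↔ τ p = s) :
    HasStrictFDerivAt τ (-(f' (0, 1))⁻¹ • f'.comp (inl 𝕜 E 𝕜)) p₀ := by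
  set e := ContinuousLinearEquiv.unitsEquivAut 𝕜 (Units.mk0 _ hf₂)
  have he : (e : 𝕜 →L[𝕜] 𝕜) = f'.comp (inr 𝕜 E 𝕜) := by
    ext; simp [e]
  have hinv : (f'.comp (inr 𝕜 E 𝕜)).IsInvertible := ⟨e, he⟩
  have hc : f (p₀, τ p₀) = c := (hτ _ _).2 rfl
  -- Global uniqueness of the zero identifies `τ` with the local implicit function, with no
  -- continuity of `τ` assumed.
  refine (hf.hasStrictFDerivAt_implicitFunctionOfProdDomain hinv).congr_of_eventuallyEq
    ((hf.eventually_apply_implicitFunctionOfProdDomain hinv).mono fun p hp =>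
      ((hτ p _).1 (hp.trans hc)).symm) |>.congr_fderiv ?_
  ext p
  simp [← he, e, mul_comm]

theorem hasStrictFDerivAt_norm_of_ne_zero {E : Type*} [NormedAddCommGroup E]
    [InnerProductSpace ℝ E] {y : E} (hy : y ≠ 0) :
    HasStrictFDerivAt (‖·‖) (innerSL ℝ (‖y‖⁻¹ • y)) y := by
  have h := (hasStrictFDerivAt_norm_sq y).sqrt (by positivity)
  simp only [Real.sqrt_sq (norm_nonneg _)] at h
  refine h.congr_fderiv ?_
  ext z
  simp
  field_simp

theorem eq_of_eq_add_norm_sub_of_subluminal {E : Type*} [SeminormedAddCommGroup E] {xj : ℝ → E}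
    (hsub : ∀ a b : ℝ, a ≠ b → ‖xj a - xj b‖ < |a - b|) {t s s' : ℝ} {x : E}
    (hs : s = t + ‖x - xj s‖) (hs' : s' = t + ‖x - xj s'‖) : s = s' := by
  by_contra hne
  have hdiff : s - s' = ‖x - xj s‖ - ‖x - xj s'‖ := by linarith
  have hle : |s - s'| ≤ ‖xj s' - xj s‖ := by
    calc |s - s'| = |‖x - xj s‖ - ‖x - xj s'‖| := by rw [hdiff]
      _ ≤ ‖(x - xj s) - (x - xj s')‖ := abs_norm_sub_norm_le _ _
      _ = ‖xj s' - xj s‖ := by rw [sub_sub_sub_cancel_left]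
  have hlt := hsub s' s (Ne.symm hne)
  rw [abs_sub_comm] at hlt
  exact hle.not_gt hlt

section AdvancedTime

variable {E : Type*} [NormedAddCommGroup E] [InnerProductSpace ℝ E] [CompleteSpace E]
  {xj : ℝ → E} {tplus : ℝ → E → ℝ} {t₀ : ℝ} {x₀ v n : E}

theorem hasStrictFDerivAt_advancedTime (hsub : ∀ a b : ℝ, a ≠ b → ‖xj a - xj b‖ < |a - b|)
    (htp : ∀ t x, tplus t x = t + ‖x - xj (tplus t x)‖)
    (hxj : HasStrictDerivAt xj v (tplus t₀ x₀)) (hpos : 0 < ‖x₀ - xj (tplus t₀ x₀)‖)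
    (hn : n = ‖x₀ - xj (tplus t₀ x₀)‖⁻¹ • (x₀ - xj (tplus t₀ x₀))) (hc : 1 + ⟪n, v⟫ ≠ 0) :
    HasStrictFDerivAt (fun p : ℝ × E => tplus p.1 p.2)
      ((1 + ⟪n, v⟫)⁻¹ • (fst ℝ ℝ E + (innerSL ℝ n).comp (snd ℝ ℝ E))) (t₀, x₀) := by
  set s₀ := tplus t₀ x₀
  have hdefect : HasStrictFDerivAt (fun q : (ℝ × E) × ℝ => q.2 - q.1.1 - ‖q.1.2 - xj q.2‖) _
      ((t₀, x₀), s₀) :=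
    (hasStrictFDerivAt_snd.sub (hasStrictFDerivAt_fst.comp _ hasStrictFDerivAt_fst)).sub
      ((hasStrictFDerivAt_norm_of_ne_zero (norm_pos_iff.mp hpos)).comp ((t₀, x₀), s₀)
        ((hasStrictFDerivAt_snd.comp _ hasStrictFDerivAt_fst).sub
          (hxj.hasStrictFDerivAt.comp ((t₀, x₀), s₀) hasStrictFDerivAt_snd)))
  rw [← hn] at hdefect
  refine (hdefect.hasStrictFDerivAt_of_apply_eq_iff ?_ (c := 0) fun p s => ?_).congr_fderiv ?_
  · simpa [add_comm] using hc
  · constructor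
    · intro hs
      exact eq_of_eq_add_norm_sub_of_subluminal hsub (htp p.1 p.2) (by linarith)
    · rintro rfl
      linarith [htp p.1 p.2]
  · ext p <;> simp

theorem hasStrictFDerivAt_advancedDelay (hsub : ∀ a b : ℝ, a ≠ b → ‖xj a - xj b‖ < |a - b|)
    (htp : ∀ t x, tplus t x = t + ‖x - xj (tplus t x)‖)
    (hxj : HasStrictDerivAt xj v (tplus t₀ x₀)) (hpos : 0 < ‖x₀ - xj (tplus t₀ x₀)‖)
    (hn : n = ‖x₀ - xj (tplus t₀ x₀)‖⁻¹ • (x₀ - xj (tplus t₀ x₀))) (hc : 1 + ⟪n, v⟫ ≠ 0) :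
    HasStrictFDerivAt (fun p : ℝ × E => ‖p.2 - xj (tplus p.1 p.2)‖)
      ((1 + ⟪n, v⟫)⁻¹ • (fst ℝ ℝ E + (innerSL ℝ n).comp (snd ℝ ℝ E)) - fst ℝ ℝ E) (t₀, x₀) := by
  have hdelay : (fun p : ℝ × E => ‖p.2 - xj (tplus p.1 p.2)‖) = fun p => tplus p.1 p.2 - p.1 :=
    funext fun p => by linarith [htp p.1 p.2]
  rw [hdelay]
  exact (hasStrictFDerivAt_advancedTime hsub htp hxj hpos hn hc).sub hasStrictFDerivAt_fst

end AdvancedTime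

theorem HasFDerivAt.hasGradientAt_prodMk_right {E F : Type*} [NormedAddCommGroup E]
    [InnerProductSpace ℝ E] [CompleteSpace E] [NormedAddCommGroup F] [NormedSpace ℝ F]
    {φ : F × E → ℝ} {L : F × E →L[ℝ] ℝ} {p₀ : F} {x₀ : E} {g : E} (h : HasFDerivAt φ L (p₀, x₀))
    (hg : ∀ dx, L (0, dx) = ⟪g, dx⟫) : HasGradientAt (fun x => φ (p₀, x)) g x₀ := by
  rw [hasGradientAt_iff_hasFDerivAt]
  refine (h.comp x₀ (hasFDerivAt_prodMk_right p₀ x₀)).congr_fderiv ?_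
  ext dx
  simp [hg]

theorem HasFDerivAt.hasDerivAt_prodMk_left {E : Type*} [NormedAddCommGroup E] [NormedSpace ℝ E]
    {φ : ℝ × E → ℝ} {L : ℝ × E →L[ℝ] ℝ} {t₀ : ℝ} {x₀ : E} (h : HasFDerivAt φ L (t₀, x₀)) :
    HasDerivAt (fun t => φ (t, x₀)) (L (1, 0)) t₀ :=
  h.comp_hasDerivAt t₀ ((hasDerivAt_id t₀).prodMk (hasDerivAt_const t₀ x₀))

theorem one_add_real_inner_pos {E : Type*} [NormedAddCommGroup E] [InnerProductSpace ℝ E]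
    {n v : E} (hn : ‖n‖ ≤ 1) (hv : ‖v‖ < 1) : 0 < 1 + ⟪n, v⟫ := by
  have hnv : ‖n‖ * ‖v‖ < 1 := by nlinarith [norm_nonneg n, norm_nonneg v]
  linarith [neg_abs_le ⟪n, v⟫, abs_real_inner_le_norm n v]

theorem stmt_3_general (xj : ℝ → EuclideanSpace ℝ (Fin 3))
    (hsub : ∀ a b : ℝ, a ≠ b → ‖xj a - xj b‖ < |a - b|)
    (tplus : ℝ → EuclideanSpace ℝ (Fin 3) → ℝ)
    (htp : ∀ t x, tplus t x = t + ‖x - xj (tplus t x)‖)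
    (t₀ : ℝ) (x₀ : EuclideanSpace ℝ (Fin 3))
    (hpos : 0 < ‖x₀ - xj (tplus t₀ x₀)‖)
    (v' : ℝ → EuclideanSpace ℝ (Fin 3)) (U : Set ℝ)
    (hU : U ∈ nhds (tplus t₀ x₀))
    (hderiv : ∀ s ∈ U, HasDerivAt xj (v' s) s)
    (hcv : ContinuousOn v' U)
    (hlum : ∀ s ∈ U, ‖v' s‖ < 1)
    (v : EuclideanSpace ℝ (Fin 3)) (hv : v = v' (tplus t₀ x₀))
    (nhat : EuclideanSpace ℝ (Fin 3))
    (hn : nhat = ‖x₀ - xj (tplus t₀ x₀)‖⁻¹ • (x₀ - xj (tplus t₀ x₀))) :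
    DifferentiableAt ℝ
        (fun p : ℝ × EuclideanSpace ℝ (Fin 3) => ‖p.2 - xj (tplus p.1 p.2)‖) (t₀, x₀) ∧
    HasGradientAt (fun x => ‖x - xj (tplus t₀ x)‖)
        ((1 + ⟪nhat, v⟫)⁻¹ • nhat) x₀ ∧
    HasDerivAt (fun t => ‖x₀ - xj (tplus t x₀)‖)
        (-⟪nhat, v⟫ / (1 + ⟪nhat, v⟫)) t₀ ∧
    -⟪nhat, v⟫ / (1 + ⟪nhat, v⟫) = ‖(1 + ⟪nhat, v⟫)⁻¹ • nhat‖ - 1 := by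
  have hxj : HasStrictDerivAt xj v (tplus t₀ x₀) := hv ▸
    hasStrictDerivAt_of_hasDerivAt_of_continuousAt (eventually_of_mem hU hderiv)
      (hcv.continuousAt hU)
  have hnorm : ‖nhat‖ = 1 := hn ▸ norm_smul_inv_norm (norm_pos_iff.mp hpos)
  have hc : 0 < 1 + ⟪nhat, v⟫ := one_add_real_inner_pos hnorm.le (hv ▸ hlum _ (mem_of_mem_nhds hU))
  have hφ := (hasStrictFDerivAt_advancedDelay hsub htp hxj hpos hn hc.ne').hasFDerivAt
  refine ⟨hφ.differentiableAt, hφ.hasGradientAt_prodMk_right fun dx => ?_,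
    hφ.hasDerivAt_prodMk_left.congr_deriv ?_, ?_⟩
  · simp [real_inner_smul_left]
  · simp
    field_simp
    ring
  · rw [norm_smul, hnorm, mul_one, Real.norm_of_nonneg (inv_pos.mpr hc).le]
    field_simp
    ring

/-- gradient and time derivative of the advanced delay function. -/
theorem stmt_3 (xj : ℝ → EuclideanSpace ℝ (Fin 3))
    (hcont : Continuous xj)
    (hbdd : Bornology.IsBounded (Set.range xj))
    (hsub : ∀ a b : ℝ, a ≠ b → ‖xj a - xj b‖ < |a - b|)
    (tplus : ℝ → EuclideanSpace ℝ (Fin 3) → ℝ)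
    (htp : ∀ t x, tplus t x = t + ‖x - xj (tplus t x)‖)
    (t₀ : ℝ) (x₀ : EuclideanSpace ℝ (Fin 3))
    (hpos : 0 < ‖x₀ - xj (tplus t₀ x₀)‖)
    (v' : ℝ → EuclideanSpace ℝ (Fin 3)) (U : Set ℝ)
    (hU : U ∈ nhds (tplus t₀ x₀))
    (hderiv : ∀ s ∈ U, HasDerivAt xj (v' s) s)
    (hcv : ContinuousOn v' U)
    (hlum : ∀ s ∈ U, ‖v' s‖ < 1)
    (v : EuclideanSpace ℝ (Fin 3)) (hv : v = v' (tplus t₀ x₀))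
    (nhat : EuclideanSpace ℝ (Fin 3))
    (hn : nhat = ‖x₀ - xj (tplus t₀ x₀)‖⁻¹ • (x₀ - xj (tplus t₀ x₀))) :
    DifferentiableAt ℝ
        (fun p : ℝ × EuclideanSpace ℝ (Fin 3) => ‖p.2 - xj (tplus p.1 p.2)‖) (t₀, x₀) ∧
    HasGradientAt (fun x => ‖x - xj (tplus t₀ x)‖)
        ((1 + ⟪nhat, v⟫)⁻¹ • nhat) x₀ ∧
    HasDerivAt (fun t => ‖x₀ - xj (tplus t x₀)‖)
        (-⟪nhat, v⟫ / (1 + ⟪nhat, v⟫)) t₀ ∧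
    -⟪nhat, v⟫ / (1 + ⟪nhat, v⟫) = ‖(1 + ⟪nhat, v⟫)⁻¹ • nhat‖ - 1 :=
  stmt_3_general xj hsub tplus htp t₀ x₀ hpos v' U hU hderiv hcv hlum v hv nhat hn
end

section
/- Let x_j be a continuous, globally bounded, strictly sub-luminal trajectory with advanced light-cone time t⁺(t,x), advanced delay function φ(t,x), and unit normal field n̂(t,x). Let (t₀, x₀) satisfy φ(t₀, x₀) > 0 and assume x_j is continuously differentiable on a neighborhood of s₀ = t⁺(t₀, x₀) with ‖x_j′‖ < 1 there; write v = x_j′(s₀) and n̂ = n̂(t₀, x₀). Then the map t ↦ n̂(t, x₀) is differentiable at t₀ with derivative ∂n̂/∂t(t₀, x₀) = (⟪n̂, v⟫ n̂ − v) / (φ(t₀, x₀)(1 + ⟪n̂, v⟫)). -/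
/-!
Along the ray of fixed `x`, the advanced time `τ(t) = t⁺(t, x)` is a right inverse of
`g(s) = s - ‖x - x_j(s)‖`, which strict sub-luminality makes strictly increasing; so `g` is an
order isomorphism of `ℝ` and `τ` is continuous. At `s₀ = τ(t₀)` the inverse function rule gives
`τ' = 1 / g'(s₀) = 1 / (1 + ⟪n̂, v⟫)`, where `1 + ⟪n̂, v⟫ > 0` because `‖v‖ < 1`. The chain rule
then differentiates `t ↦ x - x_j(τ t)`, and the derivative of `u ↦ u / ‖u‖`, namely
`w ↦ (w - ⟪n̂, w⟫ n̂) / ‖u‖`, finishes the computation.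
-/

open scoped RealInnerProductSpace

section Calculus

variable {E : Type*} [NormedAddCommGroup E] [InnerProductSpace ℝ E] {f : ℝ → E} {f' : E} {t : ℝ}

theorem HasDerivAt.norm (hf : HasDerivAt f f' t) (h0 : f t ≠ 0) :
    HasDerivAt (fun s => ‖f s‖) ⟪‖f t‖⁻¹ • f t, f'⟫ t := by
  have hne : ‖f t‖ ≠ 0 := norm_ne_zero_iff.2 h0
  have hsqrt := hf.norm_sq.sqrt (pow_ne_zero 2 hne)
  simp only [Real.sqrt_sq (norm_nonneg _)] at hsqrt
  convert hsqrt using 1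
  rw [real_inner_smul_left]
  field_simp

theorem HasDerivAt.norm_inv_smul (hf : HasDerivAt f f' t) (h0 : f t ≠ 0) :
    HasDerivAt (fun s => ‖f s‖⁻¹ • f s)
      (‖f t‖⁻¹ • (f' - ⟪‖f t‖⁻¹ • f t, f'⟫ • ‖f t‖⁻¹ • f t)) t := by
  have hne : ‖f t‖ ≠ 0 := norm_ne_zero_iff.2 h0
  refine (((hf.norm h0).inv hne).smul hf).congr_deriv ?_
  simp only [smul_sub, smul_smul, Pi.inv_apply]
  match_scalars <;> field_simp

end Calculus

theorem StrictMono.hasDerivAt_of_rightInverse {g σ : ℝ → ℝ} (hg : StrictMono g)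
    (hσ : Function.RightInverse σ g) {g' t : ℝ} (hd : HasDerivAt g g' (σ t)) (hg' : g' ≠ 0) :
    HasDerivAt σ g'⁻¹ t :=
  have hσc : Continuous σ := (hg.orderIsoOfRightInverse g σ hσ).symm.continuous
  hd.of_local_left_inverse hσc.continuousAt hg' (Filter.Eventually.of_forall hσ)

section LightCone

variable {E : Type*} [NormedAddCommGroup E] {xj : ℝ → E}

theorem strictMono_sub_norm_sub (hsub : ∀ a b : ℝ, a ≠ b → ‖xj a - xj b‖ < |a - b|) (x : E) :
    StrictMono fun s => s - ‖x - xj s‖ := by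
  intro a b hab
  have hlip : ‖x - xj b‖ - ‖x - xj a‖ ≤ ‖xj a - xj b‖ := by
    simpa using norm_sub_norm_le (x - xj b) (x - xj a)
  have hlt := hsub a b hab.ne
  rw [abs_of_neg (sub_neg.2 hab)] at hlt
  dsimp only
  linarith

theorem hasDerivAt_advancedTime [InnerProductSpace ℝ E]
    (hsub : ∀ a b : ℝ, a ≠ b → ‖xj a - xj b‖ < |a - b|)
    {τ : ℝ → ℝ} {x : E} (hτ : ∀ t, τ t = t + ‖x - xj (τ t)‖) {t : ℝ} {v : E}
    (hv : HasDerivAt xj v (τ t)) (hlum : ‖v‖ < 1) (h0 : x - xj (τ t) ≠ 0) :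
    HasDerivAt τ (1 + ⟪‖x - xj (τ t)‖⁻¹ • (x - xj (τ t)), v⟫)⁻¹ t := by
  set n := ‖x - xj (τ t)‖⁻¹ • (x - xj (τ t))
  have hinner : |⟪n, v⟫| < 1 := by
    calc |⟪n, v⟫| ≤ ‖n‖ * ‖v‖ := abs_real_inner_le_norm n v
      _ = ‖v‖ := by rw [norm_smul, norm_inv, norm_norm, inv_mul_cancel₀ (norm_ne_zero_iff.2 h0),
        one_mul]
      _ < 1 := hlum
  have hg' : HasDerivAt (fun s => s - ‖x - xj s‖) (1 + ⟪n, v⟫) (τ t) := by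
    refine ((hasDerivAt_id (τ t)).sub ((hv.const_sub x).norm h0)).congr_deriv ?_
    rw [inner_neg_right, sub_neg_eq_add]
  refine (strictMono_sub_norm_sub hsub x).hasDerivAt_of_rightInverse (fun t => ?_) hg' ?_
  · linarith [hτ t]
  · linarith [(abs_lt.1 hinner).1]

end LightCone

theorem stmt_5_general (xj : ℝ → EuclideanSpace ℝ (Fin 3))
    (hsub : ∀ a b : ℝ, a ≠ b → ‖xj a - xj b‖ < |a - b|)
    (tplus : ℝ → EuclideanSpace ℝ (Fin 3) → ℝ)
    (htp : ∀ t x, tplus t x = t + ‖x - xj (tplus t x)‖)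
    (t₀ : ℝ) (x₀ : EuclideanSpace ℝ (Fin 3))
    (hpos : 0 < ‖x₀ - xj (tplus t₀ x₀)‖)
    (v' : ℝ → EuclideanSpace ℝ (Fin 3)) (U : Set ℝ)
    (hU : U ∈ nhds (tplus t₀ x₀))
    (hderiv : ∀ s ∈ U, HasDerivAt xj (v' s) s)
    (hlum : ∀ s ∈ U, ‖v' s‖ < 1)
    (v : EuclideanSpace ℝ (Fin 3)) (hv : v = v' (tplus t₀ x₀))
    (nhat : EuclideanSpace ℝ (Fin 3))
    (hn : nhat = ‖x₀ - xj (tplus t₀ x₀)‖⁻¹ • (x₀ - xj (tplus t₀ x₀))) :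
    HasDerivAt
      (fun t => ‖x₀ - xj (tplus t x₀)‖⁻¹ • (x₀ - xj (tplus t x₀)))
      ((‖x₀ - xj (tplus t₀ x₀)‖ * (1 + ⟪nhat, v⟫))⁻¹ • (⟪nhat, v⟫ • nhat - v)) t₀ := by
  have hs₀ : tplus t₀ x₀ ∈ U := mem_of_mem_nhds hU
  have hxj : HasDerivAt xj v (tplus t₀ x₀) := hv ▸ hderiv _ hs₀
  have h0 : x₀ - xj (tplus t₀ x₀) ≠ 0 := norm_pos_iff.1 hpos
  have hτ : HasDerivAt (fun t => tplus t x₀) (1 + ⟪nhat, v⟫)⁻¹ t₀ :=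
    hn ▸ hasDerivAt_advancedTime hsub (fun t => htp t x₀) hxj (hv ▸ hlum _ hs₀) h0
  have hF : HasDerivAt (fun t => x₀ - xj (tplus t x₀)) (-((1 + ⟪nhat, v⟫)⁻¹ • v)) t₀ :=
    (hxj.scomp t₀ hτ).const_sub x₀
  refine (hF.norm_inv_smul h0).congr_deriv ?_
  rw [← hn, mul_inv, mul_smul, inner_neg_right, real_inner_smul_right, smul_smul]
  match_scalars <;> ring

/-- time derivative of the unit normal field of the advanced light cone. -/
theorem stmt_5 (xj : ℝ → EuclideanSpace ℝ (Fin 3))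
    (hcont : Continuous xj)
    (hbdd : Bornology.IsBounded (Set.range xj))
    (hsub : ∀ a b : ℝ, a ≠ b → ‖xj a - xj b‖ < |a - b|)
    (tplus : ℝ → EuclideanSpace ℝ (Fin 3) → ℝ)
    (htp : ∀ t x, tplus t x = t + ‖x - xj (tplus t x)‖)
    (t₀ : ℝ) (x₀ : EuclideanSpace ℝ (Fin 3))
    (hpos : 0 < ‖x₀ - xj (tplus t₀ x₀)‖)
    (v' : ℝ → EuclideanSpace ℝ (Fin 3)) (U : Set ℝ)
    (hU : U ∈ nhds (tplus t₀ x₀))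
    (hderiv : ∀ s ∈ U, HasDerivAt xj (v' s) s)
    (hcv : ContinuousOn v' U)
    (hlum : ∀ s ∈ U, ‖v' s‖ < 1)
    (v : EuclideanSpace ℝ (Fin 3)) (hv : v = v' (tplus t₀ x₀))
    (nhat : EuclideanSpace ℝ (Fin 3))
    (hn : nhat = ‖x₀ - xj (tplus t₀ x₀)‖⁻¹ • (x₀ - xj (tplus t₀ x₀))) :
    HasDerivAt
      (fun t => ‖x₀ - xj (tplus t x₀)‖⁻¹ • (x₀ - xj (tplus t x₀)))
      ((‖x₀ - xj (tplus t₀ x₀)‖ * (1 + ⟪nhat, v⟫))⁻¹ • (⟪nhat, v⟫ • nhat - v)) t₀ :=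
  stmt_5_general xj hsub tplus htp t₀ x₀ hpos v' U hU hderiv hlum v hv nhat hn
end

section
/- Let x_j be a continuous, globally bounded, strictly sub-luminal trajectory with advanced light-cone time t⁺(t,x), advanced delay function φ(t,x), and unit normal field n̂(t,x). Let (t₀, x₀) satisfy φ(t₀, x₀) > 0 and assume x_j is twice continuously differentiable on a neighborhood of s₀ = t⁺(t₀, x₀) with ‖x_j′‖ < 1 there; write v = x_j′(s₀) and n̂ = n̂(t₀, x₀). Then φ satisfies the wave-type relation Δ_x φ(t₀, x₀) − ∂²φ/∂t²(t₀, x₀) = 2 / (φ(t₀, x₀)(1 + ⟪n̂, v⟫)), where Δ_x denotes the spatial Laplacian. -/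
open scoped RealInnerProductSpace

/-- The spatial Laplacian: sum of the three second partial derivatives in
Cartesian coordinates. -/
noncomputable def laplacian3 (f : EuclideanSpace ℝ (Fin 3) → ℝ)
    (x : EuclideanSpace ℝ (Fin 3)) : ℝ :=
  ∑ i : Fin 3,
    fderiv ℝ (fderiv ℝ f) x (EuclideanSpace.single i 1) (EuclideanSpace.single i 1)


lemma deriv2_shift (f : ℝ → ℝ) (t₀ : ℝ) :
    deriv (deriv f) t₀ = deriv (deriv fun r : ℝ => f (t₀ + r)) 0 := by
  have h1 : (deriv fun r : ℝ => f (t₀ + r)) = fun r => deriv f (t₀ + r) := by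
    funext r; exact deriv_comp_const_add f t₀ r
  rw [h1, deriv_comp_const_add (deriv f) t₀ 0, add_zero]

lemma second_deriv_slice {F : Type*} [NormedAddCommGroup F] [NormedSpace ℝ F]
    (f : F → ℝ) (x₀ : F) (e : F) (hf : ContDiffAt ℝ 2 f x₀) :
    fderiv ℝ (fderiv ℝ f) x₀ e e = deriv (deriv fun r : ℝ => f (x₀ + r • e)) 0 := by
  obtain ⟨u, hu, hcd⟩ := hf.contDiffOn (m := 2) le_rfl (by simp)
  obtain ⟨t, htu, hto, hxt⟩ := mem_nhds_iff.mp hu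
  have hdiff : ∀ y ∈ t, HasFDerivAt f (fderiv ℝ f y) y := by
    intro y hy
    have : DifferentiableAt ℝ f y := by
      have := ((hcd.mono htu) y hy).differentiableWithinAt (by norm_num)
      exact this.differentiableAt (hto.mem_nhds hy)
    exact this.hasFDerivAt
  -- the slice derivative
  have hline : ∀ r : ℝ, HasDerivAt (fun r : ℝ => x₀ + r • e) e r := by
    intro r
    simpa using ((hasDerivAt_id r).smul_const e).const_add x₀
  have hev : ∀ᶠ r in nhds (0:ℝ), x₀ + r • e ∈ t := by
    have hc : ContinuousAt (fun r : ℝ => x₀ + r • e) 0 := ((hline 0).continuousAt)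
    have : (fun r : ℝ => x₀ + r • e) 0 = x₀ := by simp
    have h0 : t ∈ nhds ((fun r : ℝ => x₀ + r • e) 0) := by rw [this]; exact hto.mem_nhds hxt
    exact hc.preimage_mem_nhds h0
  have hds : ∀ᶠ r in nhds (0:ℝ),
      deriv (fun r : ℝ => f (x₀ + r • e)) r = fderiv ℝ f (x₀ + r • e) e := by
    filter_upwards [hev] with r hr
    exact ((hdiff _ hr).comp_hasDerivAt r (hline r)).deriv
  rw [Filter.EventuallyEq.deriv_eq hds]
  have hfd : DifferentiableAt ℝ (fderiv ℝ f) x₀ :=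
    (hf.fderiv_right (m := 1) (by norm_num)).differentiableAt (by norm_num)
  have h2 : HasDerivAt (fun r : ℝ => fderiv ℝ f (x₀ + r • e)) (fderiv ℝ (fderiv ℝ f) x₀ e) 0 := by
    have h0 : (x₀ : F) = x₀ + (0:ℝ) • e := by simp
    rw [h0] at hfd
    have := hfd.hasFDerivAt.comp_hasDerivAt 0 (hline 0)
    rw [← h0] at this
    exact this
  have h3 : HasDerivAt (fun r : ℝ => fderiv ℝ f (x₀ + r • e) e)
      (fderiv ℝ (fderiv ℝ f) x₀ e e) 0 := by
    have := ((ContinuousLinearMap.apply ℝ ℝ e).hasFDerivAt.comp_hasDerivAt 0 h2)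
    exact this
  exact h3.deriv.symm


lemma hasFDerivAt_norm_inner {E : Type*} [NormedAddCommGroup E] [InnerProductSpace ℝ E]
    (y₀ : E) (h : y₀ ≠ 0) :
    HasFDerivAt (fun y : E => ‖y‖) (innerSL ℝ (‖y₀‖⁻¹ • y₀)) y₀ := by
  have hpos : (0:ℝ) < ‖y₀‖ := norm_pos_iff.mpr h
  have h1 : HasFDerivAt (fun y : E => ‖y‖ ^ 2) (2 • (innerSL ℝ y₀)) y₀ :=
    (hasStrictFDerivAt_norm_sq y₀).hasFDerivAt
  have h2 : HasDerivAt Real.sqrt (1 / (2 * Real.sqrt (‖y₀‖^2))) (‖y₀‖^2) :=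
    Real.hasDerivAt_sqrt (by positivity)
  have h3 := h2.comp_hasFDerivAt y₀ h1
  have h4' : (Real.sqrt ∘ fun y : E => ‖y‖^2) = fun y : E => ‖y‖ := by
    funext y; simp [Function.comp, Real.sqrt_sq (norm_nonneg y)]
  rw [h4'] at h3
  convert h3 using 1 <;> try rfl
  ext dy
  rw [Real.sqrt_sq (norm_nonneg y₀)]
  simp [inner_smul_left]
  field_simp

lemma xj_contDiffAt {E : Type*} [NormedAddCommGroup E] [NormedSpace ℝ E]
    (xj v' a' : ℝ → E) (U : Set ℝ) (s₀ : ℝ) (hU : U ∈ nhds s₀)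
    (hderiv : ∀ s ∈ U, HasDerivAt xj (v' s) s)
    (hderiv2 : ∀ s ∈ U, HasDerivAt v' (a' s) s)
    (hca : ContinuousOn a' U) :
    ContDiffAt ℝ 2 xj s₀ := by
  have hv1 : ContDiffAt ℝ 1 v' s₀ := by
    rw [show ((1:WithTop ℕ∞)) = ((0:ℕ):WithTop ℕ∞) + 1 by norm_num, contDiffAt_succ_iff_hasFDerivAt]
    refine ⟨fun s => ContinuousLinearMap.smulRight (1 : ℝ →L[ℝ] ℝ) (a' s), ⟨U, hU, ?_⟩, ?_⟩
    · intro s hs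
      exact (hderiv2 s hs).hasFDerivAt
    · rw [show ((0:ℕ) : WithTop ℕ∞) = 0 from rfl, contDiffAt_zero]
      refine ⟨U, hU, ?_⟩
      exact (ContinuousLinearMap.smulRightL ℝ ℝ E (1 : ℝ →L[ℝ] ℝ)).continuous.comp_continuousOn hca
  rw [show ((2:WithTop ℕ∞)) = ((1:ℕ):WithTop ℕ∞) + 1 by norm_num, contDiffAt_succ_iff_hasFDerivAt]
  refine ⟨fun s => ContinuousLinearMap.smulRight (1 : ℝ →L[ℝ] ℝ) (v' s), ⟨U, hU, ?_⟩, ?_⟩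
  · intro s hs
    exact (hderiv s hs).hasFDerivAt
  · have : ContDiffAt ℝ 1 (fun s => ContinuousLinearMap.smulRight (1 : ℝ →L[ℝ] ℝ) (v' s)) s₀ :=
      ((ContinuousLinearMap.smulRightL ℝ ℝ E (1 : ℝ →L[ℝ] ℝ)).contDiff.contDiffAt).comp s₀ hv1
    exact_mod_cast this

lemma tplus_contDiffAt {E : Type*} [NormedAddCommGroup E] [InnerProductSpace ℝ E] [CompleteSpace E]
    (xj v' a' : ℝ → E) (U : Set ℝ)
    (hcont : Continuous xj)
    (hsub : ∀ a b : ℝ, a ≠ b → ‖xj a - xj b‖ < |a - b|)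
    (tplus : ℝ → E → ℝ)
    (htp : ∀ t x, tplus t x = t + ‖x - xj (tplus t x)‖)
    (t₀ : ℝ) (x₀ : E)
    (hpos : 0 < ‖x₀ - xj (tplus t₀ x₀)‖)
    (hU : U ∈ nhds (tplus t₀ x₀))
    (hderiv : ∀ s ∈ U, HasDerivAt xj (v' s) s)
    (hderiv2 : ∀ s ∈ U, HasDerivAt v' (a' s) s)
    (hca : ContinuousOn a' U)
    (hlum : ∀ s ∈ U, ‖v' s‖ < 1) :
    ContDiffAt ℝ 2 (fun p : ℝ × E => tplus p.1 p.2) (t₀, x₀) := by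
  -- basic notations
  have hs₀U : tplus t₀ x₀ ∈ U := mem_of_mem_nhds hU
  have hy₀ : x₀ - xj (tplus t₀ x₀) ≠ 0 := by
    intro hh; rw [hh] at hpos; simp at hpos
  -- the unit normal and κ
  have hn₀ : ‖(‖x₀ - xj (tplus t₀ x₀)‖⁻¹ • (x₀ - xj (tplus t₀ x₀)) : E)‖ = 1 := by
    rw [norm_smul]; simp [abs_of_pos hpos]
    field_simp
  set s₀ := tplus t₀ x₀ with hs₀def
  set y₀ : E := x₀ - xj s₀ with hy₀def
  set n₀ : E := ‖y₀‖⁻¹ • y₀ with hn₀def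
  set v₀ : E := v' s₀ with hv₀def
  set κ : ℝ := 1 + ⟪n₀, v₀⟫ with hκdef
  have hκpos : 0 < κ := by
    have h1 : |⟪n₀, v₀⟫| ≤ ‖n₀‖ * ‖v₀‖ := abs_real_inner_le_norm n₀ v₀
    have h2 : ‖v₀‖ < 1 := hlum s₀ hs₀U
    rw [hn₀, one_mul] at h1
    have := abs_le.mp h1
    simp only [hκdef]
    linarith
  have hκ : κ ≠ 0 := ne_of_gt hκpos
  -- the function g for the inverse function theorem
  set g : ℝ × (ℝ × E) → ℝ × (ℝ × E) :=
    fun z => (z.1 - z.2.1 - ‖z.2.2 - xj z.1‖, z.2) with hgdef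
  -- g is C²
  have hxj2 : ContDiffAt ℝ 2 xj s₀ := xj_contDiffAt xj v' a' U s₀ hU hderiv hderiv2 hca
  have hq2 : ContDiffAt ℝ 2 (fun z : ℝ × (ℝ × E) => z.2.2 - xj z.1) (s₀, (t₀, x₀)) := by
    exact ((contDiff_snd.comp contDiff_snd).contDiffAt).sub (ContDiffAt.comp (s₀, (t₀, x₀)) hxj2 contDiffAt_fst)
  have hq2val : (fun z : ℝ × (ℝ × E) => z.2.2 - xj z.1) (s₀, (t₀, x₀)) = y₀ := rfl
  have hnormc : ContDiffAt ℝ 2 (fun z : ℝ × (ℝ × E) => ‖z.2.2 - xj z.1‖) (s₀, (t₀, x₀)) := by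
    exact hq2.norm ℝ hy₀
  have hg2 : ContDiffAt ℝ 2 g (s₀, (t₀, x₀)) := by
    refine ContDiffAt.prodMk ?_ (contDiff_snd.contDiffAt)
    exact (contDiffAt_fst.sub ((contDiff_fst.comp contDiff_snd).contDiffAt)).sub hnormc
  -- derivative of g
  set M : (ℝ × E) →L[ℝ] ℝ :=
    -(ContinuousLinearMap.fst ℝ ℝ E) - (innerSL ℝ n₀).comp (ContinuousLinearMap.snd ℝ ℝ E)
      with hMdef
  set D : (ℝ × (ℝ × E)) →L[ℝ] ℝ :=
    κ • ContinuousLinearMap.fst ℝ ℝ (ℝ × E) + M.comp (ContinuousLinearMap.snd ℝ ℝ (ℝ × E))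
      with hDdef
  set f₁ : (ℝ × (ℝ × E)) →L[ℝ] (ℝ × (ℝ × E)) :=
    D.prod (ContinuousLinearMap.snd ℝ ℝ (ℝ × E)) with hf₁def
  set f₂ : (ℝ × (ℝ × E)) →L[ℝ] (ℝ × (ℝ × E)) :=
    (κ⁻¹ • (ContinuousLinearMap.fst ℝ ℝ (ℝ × E)
      - M.comp (ContinuousLinearMap.snd ℝ ℝ (ℝ × E)))).prod
      (ContinuousLinearMap.snd ℝ ℝ (ℝ × E)) with hf₂def
  have hf21 : Function.LeftInverse f₂ f₁ := by
    intro z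
    simp [hf₁def, hf₂def, hDdef]
    rw [inv_mul_cancel_left₀ hκ]
  have hf12 : Function.RightInverse f₂ f₁ := by
    intro z
    simp [hf₁def, hf₂def, hDdef]
    rw [mul_inv_cancel_left₀ hκ]
    simp
  set A : (ℝ × (ℝ × E)) ≃L[ℝ] (ℝ × (ℝ × E)) :=
    ContinuousLinearEquiv.equivOfInverse f₁ f₂ hf21 hf12 with hAdef
  -- HasFDerivAt g A at the point
  have hgA : HasFDerivAt g (A : (ℝ × (ℝ × E)) →L[ℝ] (ℝ × (ℝ × E))) (s₀, (t₀, x₀)) := by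
    have hcoe : (A : (ℝ × (ℝ × E)) →L[ℝ] (ℝ × (ℝ × E))) = f₁ := rfl
    rw [hcoe]
    -- derivative of the first component
    have hxjd : HasFDerivAt xj ((1 : ℝ →L[ℝ] ℝ).smulRight v₀) s₀ :=
      (hderiv s₀ hs₀U).hasFDerivAt
    have hQ : HasFDerivAt (fun z : ℝ × (ℝ × E) => z.2.2 - xj z.1)
        (((ContinuousLinearMap.snd ℝ ℝ E).comp (ContinuousLinearMap.snd ℝ ℝ (ℝ × E)))
          - ((1 : ℝ →L[ℝ] ℝ).smulRight v₀).comp (ContinuousLinearMap.fst ℝ ℝ (ℝ × E)))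
        (s₀, (t₀, x₀)) := by
      refine HasFDerivAt.sub ?_ ?_
      · exact ((ContinuousLinearMap.snd ℝ ℝ E).comp
          (ContinuousLinearMap.snd ℝ ℝ (ℝ × E))).hasFDerivAt
      · exact HasFDerivAt.comp (s₀, (t₀, x₀)) hxjd ((ContinuousLinearMap.fst ℝ ℝ (ℝ × E)).hasFDerivAt)
    have hnormd := HasFDerivAt.comp (s₀, (t₀, x₀)) (hasFDerivAt_norm_inner y₀ hy₀) hQ
    have hfirst : HasFDerivAt (fun z : ℝ × (ℝ × E) => z.1 - z.2.1 - ‖z.2.2 - xj z.1‖)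
        ((ContinuousLinearMap.fst ℝ ℝ (ℝ × E)
          - (ContinuousLinearMap.fst ℝ ℝ E).comp (ContinuousLinearMap.snd ℝ ℝ (ℝ × E)))
          - (innerSL ℝ n₀).comp
            ((((ContinuousLinearMap.snd ℝ ℝ E).comp (ContinuousLinearMap.snd ℝ ℝ (ℝ × E)))
              - ((1 : ℝ →L[ℝ] ℝ).smulRight v₀).comp (ContinuousLinearMap.fst ℝ ℝ (ℝ × E)))))
        (s₀, (t₀, x₀)) := by
      refine HasFDerivAt.sub ?_ hnormd
      exact (ContinuousLinearMap.fst ℝ ℝ (ℝ × E)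
        - (ContinuousLinearMap.fst ℝ ℝ E).comp (ContinuousLinearMap.snd ℝ ℝ (ℝ × E))).hasFDerivAt
    have hDeq : D = ContinuousLinearMap.fst ℝ ℝ (ℝ × E)
          - (ContinuousLinearMap.fst ℝ ℝ E).comp (ContinuousLinearMap.snd ℝ ℝ (ℝ × E))
          - (innerSL ℝ n₀).comp
            ((((ContinuousLinearMap.snd ℝ ℝ E).comp (ContinuousLinearMap.snd ℝ ℝ (ℝ × E)))
              - ((1 : ℝ →L[ℝ] ℝ).smulRight v₀).comp (ContinuousLinearMap.fst ℝ ℝ (ℝ × E)))) := by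
      apply ContinuousLinearMap.ext
      intro z
      simp [hDdef, hMdef, hκdef, inner_sub_right, real_inner_smul_right]
      ring
    rw [hf₁def, hDeq]
    exact hfirst.prodMk (ContinuousLinearMap.snd ℝ ℝ (ℝ × E)).hasFDerivAt
  -- strict monotonicity in s of the defining function
  have hmono : ∀ p : ℝ × E, StrictMono (fun s => s - p.1 - ‖p.2 - xj s‖) := by
    intro p a b hab
    have h1 : ‖p.2 - xj b‖ - ‖p.2 - xj a‖ ≤ ‖(p.2 - xj b) - (p.2 - xj a)‖ :=
      norm_sub_norm_le _ _
    have h2 : (p.2 - xj b) - (p.2 - xj a) = xj a - xj b := by abel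
    have h3 : ‖xj a - xj b‖ < |a - b| := hsub a b (ne_of_lt hab)
    rw [h2] at h1
    rw [abs_of_neg (by linarith : a - b < 0)] at h3
    simp only
    linarith
  have hroot : ∀ p : ℝ × E, tplus p.1 p.2 - p.1 - ‖p.2 - xj (tplus p.1 p.2)‖ = 0 := by
    intro p
    have := htp p.1 p.2
    linarith
  -- continuity of tplus at (t₀, x₀)
  have hScont : ContinuousAt (fun p : ℝ × E => tplus p.1 p.2) (t₀, x₀) := by
    rw [ContinuousAt, Metric.tendsto_nhds]
    intro ε hε
    have hc1 : ContinuousAt (fun p : ℝ × E => (s₀ + ε) - p.1 - ‖p.2 - xj (s₀ + ε)‖) (t₀, x₀) := by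
      fun_prop
    have hc2 : ContinuousAt (fun p : ℝ × E => (s₀ - ε) - p.1 - ‖p.2 - xj (s₀ - ε)‖) (t₀, x₀) := by
      fun_prop
    have hv1 : 0 < (s₀ + ε) - t₀ - ‖x₀ - xj (s₀ + ε)‖ := by
      have := hmono (t₀, x₀) (lt_add_of_pos_right s₀ hε)
      have h0 := hroot (t₀, x₀)
      simp only at this h0 ⊢
      linarith
    have hv2 : (s₀ - ε) - t₀ - ‖x₀ - xj (s₀ - ε)‖ < 0 := by
      have := hmono (t₀, x₀) (sub_lt_self s₀ hε)
      have h0 := hroot (t₀, x₀)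
      simp only at this h0 ⊢
      linarith
    have he1 : ∀ᶠ p : ℝ × E in nhds (t₀, x₀), 0 < (s₀ + ε) - p.1 - ‖p.2 - xj (s₀ + ε)‖ :=
      hc1.eventually (p := fun y => 0 < y) (eventually_gt_nhds hv1)
    have he2 : ∀ᶠ p : ℝ × E in nhds (t₀, x₀), (s₀ - ε) - p.1 - ‖p.2 - xj (s₀ - ε)‖ < 0 :=
      hc2.eventually (p := fun y => y < 0) (eventually_lt_nhds hv2)
    filter_upwards [he1, he2] with p hp1 hp2
    have hub : tplus p.1 p.2 < s₀ + ε := by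
      have := (hmono p).lt_iff_lt (a := tplus p.1 p.2) (b := s₀ + ε)
      apply this.mp
      simp only [hroot p]
      exact hp1
    have hlb : s₀ - ε < tplus p.1 p.2 := by
      have := (hmono p).lt_iff_lt (a := s₀ - ε) (b := tplus p.1 p.2)
      apply this.mp
      simp only [hroot p]
      exact hp2
    rw [Real.dist_eq, abs_lt]
    constructor <;> simp only [hs₀def] at hub hlb <;> linarith
  -- the local inverse
  have hone : (2 : WithTop ℕ∞) ≠ 0 := by norm_num
  have hstrict : HasStrictFDerivAt g (A : (ℝ × (ℝ × E)) →L[ℝ] (ℝ × (ℝ × E))) (s₀, (t₀, x₀)) :=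
    hg2.hasStrictFDerivAt' hgA hone
  have hΨcd : ContDiffAt ℝ 2 (hg2.localInverse hgA hone) (g (s₀, (t₀, x₀))) :=
    hg2.to_localInverse hgA hone
  have hΨeq : hg2.localInverse hgA hone = hstrict.localInverse g _ _ := rfl
  have hleft : ∀ᶠ z in nhds (s₀, (t₀, x₀)),
      hstrict.localInverse g _ _ (g z) = z := hstrict.eventually_left_inverse
  have hga₀ : g (s₀, (t₀, x₀)) = ((0 : ℝ), (t₀, x₀)) := by
    have h0 := hroot (t₀, x₀)
    simp only [hgdef]
    simp only at h0
    rw [Prod.mk.injEq]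
    exact ⟨by simpa using h0, rfl⟩
  have hmap : ContinuousAt (fun p : ℝ × E => ((tplus p.1 p.2, p) : ℝ × (ℝ × E))) (t₀, x₀) :=
    hScont.prodMk continuousAt_id
  have hev : ∀ᶠ p : ℝ × E in nhds (t₀, x₀),
      hstrict.localInverse g _ _ (g (tplus p.1 p.2, p)) = (tplus p.1 p.2, p) := by
    have : Filter.Tendsto (fun p : ℝ × E => ((tplus p.1 p.2, p) : ℝ × (ℝ × E)))
        (nhds (t₀, x₀)) (nhds (s₀, (t₀, x₀))) := hmap
    exact this.eventually hleft
  have hgp : ∀ p : ℝ × E, g (tplus p.1 p.2, p) = ((0 : ℝ), p) := by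
    intro p
    simp only [hgdef]
    rw [Prod.mk.injEq]
    exact ⟨hroot p, rfl⟩
  have hSloc : ∀ᶠ p : ℝ × E in nhds (t₀, x₀),
      tplus p.1 p.2 = (hstrict.localInverse g _ _ ((0 : ℝ), p)).1 := by
    filter_upwards [hev] with p hp
    rw [hgp p] at hp
    exact (congrArg Prod.fst hp).symm
  have hΨ0 : ContDiffAt ℝ 2 (hstrict.localInverse g _ _) ((0 : ℝ), (t₀, x₀)) := by
    rw [← hga₀, ← hΨeq]
    exact hΨcd
  have hcomp : ContDiffAt ℝ 2
      (fun p : ℝ × E => (hstrict.localInverse g _ _ ((0 : ℝ), p)).1) (t₀, x₀) := by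
    refine ContDiffAt.comp _ contDiffAt_fst ?_
    exact ContDiffAt.comp _ hΨ0 (contDiffAt_const.prodMk contDiffAt_id)
  exact hcomp.congr_of_eventuallyEq hSloc

lemma slice_second_deriv {E : Type*} [NormedAddCommGroup E] [InnerProductSpace ℝ E]
    [CompleteSpace E]
    (xj v' a' : ℝ → E) (U : Set ℝ)
    (hcont : Continuous xj)
    (hsub : ∀ a b : ℝ, a ≠ b → ‖xj a - xj b‖ < |a - b|)
    (tplus : ℝ → E → ℝ)
    (htp : ∀ t x, tplus t x = t + ‖x - xj (tplus t x)‖)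
    (t₀ : ℝ) (x₀ : E)
    (hpos : 0 < ‖x₀ - xj (tplus t₀ x₀)‖)
    (hU : U ∈ nhds (tplus t₀ x₀))
    (hderiv : ∀ s ∈ U, HasDerivAt xj (v' s) s)
    (hderiv2 : ∀ s ∈ U, HasDerivAt v' (a' s) s)
    (hca : ContinuousOn a' U)
    (hlum : ∀ s ∈ U, ‖v' s‖ < 1)
    (dt : ℝ) (dx : E) :
    (deriv (fun r : ℝ => tplus (t₀ + r * dt) (x₀ + r • dx)) 0)
        * (1 + ⟪‖x₀ - xj (tplus t₀ x₀)‖⁻¹ • (x₀ - xj (tplus t₀ x₀)), v' (tplus t₀ x₀)⟫)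
      = dt + ⟪‖x₀ - xj (tplus t₀ x₀)‖⁻¹ • (x₀ - xj (tplus t₀ x₀)), dx⟫ ∧
    ‖x₀ - xj (tplus t₀ x₀)‖
        * (1 + ⟪‖x₀ - xj (tplus t₀ x₀)‖⁻¹ • (x₀ - xj (tplus t₀ x₀)), v' (tplus t₀ x₀)⟫)
        * deriv (deriv (fun r : ℝ => tplus (t₀ + r * dt) (x₀ + r • dx))) 0
      = ‖dx - (deriv (fun r : ℝ => tplus (t₀ + r * dt) (x₀ + r • dx)) 0) • v' (tplus t₀ x₀)‖^2
        - (deriv (fun r : ℝ => tplus (t₀ + r * dt) (x₀ + r • dx)) 0 - dt)^2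
        - (deriv (fun r : ℝ => tplus (t₀ + r * dt) (x₀ + r • dx)) 0)^2
          * ‖x₀ - xj (tplus t₀ x₀)‖
          * ⟪‖x₀ - xj (tplus t₀ x₀)‖⁻¹ • (x₀ - xj (tplus t₀ x₀)), a' (tplus t₀ x₀)⟫ := by
  have hS : ContDiffAt ℝ 2 (fun p : ℝ × E => tplus p.1 p.2) (t₀, x₀) :=
    tplus_contDiffAt xj v' a' U hcont hsub tplus htp t₀ x₀ hpos hU hderiv hderiv2 hca hlum
  have hs₀U : tplus t₀ x₀ ∈ U := mem_of_mem_nhds hU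
  set s₀ := tplus t₀ x₀ with hs₀def
  set y₀ : E := x₀ - xj s₀ with hy₀def
  set n₀ : E := ‖y₀‖⁻¹ • y₀ with hn₀def
  set v₀ : E := v' s₀ with hv₀def
  set a₀ : E := a' s₀ with ha₀def
  have hφ : (0:ℝ) < ‖y₀‖ := hpos
  have hφne : ‖y₀‖ ≠ 0 := ne_of_gt hφ
  have hy₀n : y₀ = ‖y₀‖ • n₀ := by rw [hn₀def, smul_inv_smul₀ hφne]
  -- the slice function
  set σ : ℝ → ℝ := fun r => tplus (t₀ + r * dt) (x₀ + r • dx) with hσdef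
  have hline : ContDiff ℝ 2 (fun r : ℝ => ((t₀ + r * dt, x₀ + r • dx) : ℝ × E)) := by
    apply ContDiff.prodMk
    · exact contDiff_const.add (contDiff_id.mul contDiff_const)
    · exact contDiff_const.add (ContDiff.smul contDiff_id contDiff_const)
  have hline0 : (fun r : ℝ => ((t₀ + r * dt, x₀ + r • dx) : ℝ × E)) 0 = (t₀, x₀) := by simp
  have hS' : ContDiffAt ℝ 2 (fun p : ℝ × E => tplus p.1 p.2)
      ((fun r : ℝ => ((t₀ + r * dt, x₀ + r • dx) : ℝ × E)) 0) := by
    rw [hline0]; exact hS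
  have hσ2 : ContDiffAt ℝ 2 σ 0 := ContDiffAt.comp (g := fun p : ℝ × E => tplus p.1 p.2) 0 hS' hline.contDiffAt
  have hσ0 : σ 0 = s₀ := by simp [hσdef, hs₀def]
  -- differentiability structure of σ near 0
  obtain ⟨u, hu, hcd⟩ := hσ2.contDiffOn (m := 2) le_rfl (by simp)
  obtain ⟨tt, httu, htto, h0tt⟩ := mem_nhds_iff.mp hu
  have hσdiff : ∀ r ∈ tt, HasDerivAt σ (deriv σ r) r := by
    intro r hr
    have h1 : DifferentiableAt ℝ σ r := by
      have := ((hcd.mono httu) r hr).differentiableWithinAt (by norm_num)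
      exact this.differentiableAt (htto.mem_nhds hr)
    exact h1.hasDerivAt
  have hσd0 : HasDerivAt σ (deriv σ 0) 0 := hσdiff 0 h0tt
  have hfd : DifferentiableAt ℝ (fderiv ℝ σ) 0 :=
    (hσ2.fderiv_right (m := 1) (by norm_num)).differentiableAt (by norm_num)
  have hderσ : DifferentiableAt ℝ (deriv σ) 0 := by
    have hde : deriv σ = fun r => fderiv ℝ σ r 1 := funext fun r => rfl
    rw [hde]
    exact DifferentiableAt.comp 0
      ((ContinuousLinearMap.apply ℝ ℝ (1:ℝ)).differentiable.differentiableAt) hfd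
  have hd'0 : HasDerivAt (deriv σ) (deriv (deriv σ) 0) 0 := hderσ.hasDerivAt
  have hσcont : ContinuousAt σ 0 := hσ2.continuousAt
  have hevU : ∀ᶠ r in nhds (0:ℝ), σ r ∈ U := by
    have hU' : U ∈ nhds (σ 0) := by rw [hσ0]; exact hU
    exact hσcont.preimage_mem_nhds hU'
  have hevT : ∀ᶠ r in nhds (0:ℝ), r ∈ tt := htto.mem_nhds h0tt
  -- the vector y and the basic identity
  set y : ℝ → E := fun r => (x₀ + r • dx) - xj (σ r) with hydef
  have hy0 : y 0 = y₀ := by simp [hydef, hσ0, hy₀def]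
  have hst : ∀ r : ℝ, σ r - (t₀ + r * dt) = ‖y r‖ := by
    intro r
    have h1 := htp (t₀ + r * dt) (x₀ + r • dx)
    simp only [hσdef, hydef]
    linarith
  have hid : (fun r : ℝ => ⟪y r, y r⟫) = fun r => (σ r - (t₀ + r * dt))^2 := by
    funext r
    rw [hst r, real_inner_self_eq_norm_sq]
  -- first-order identity, eventually
  have hmain1 : ∀ᶠ r in nhds (0:ℝ),
      (⟪y r, dx - deriv σ r • v' (σ r)⟫ + ⟪dx - deriv σ r • v' (σ r), y r⟫ : ℝ)
        = 2 * (σ r - (t₀ + r * dt)) * (deriv σ r - dt) := by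
    filter_upwards [hevU, hevT] with r hrU hrT
    have hσr : HasDerivAt σ (deriv σ r) r := hσdiff r hrT
    have hxjr : HasDerivAt (fun r => xj (σ r)) (deriv σ r • v' (σ r)) r :=
      (hderiv (σ r) hrU).scomp r hσr
    have hyr : HasDerivAt y (dx - deriv σ r • v' (σ r)) r := by
      have h1 : HasDerivAt (fun r : ℝ => x₀ + r • dx) dx r := by
        simpa using ((hasDerivAt_id r).smul_const dx).const_add x₀
      exact h1.sub hxjr
    have hA : HasDerivAt (fun r => (⟪y r, y r⟫ : ℝ))
        (⟪y r, dx - deriv σ r • v' (σ r)⟫ + ⟪dx - deriv σ r • v' (σ r), y r⟫) r :=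
      hyr.inner ℝ hyr
    have htr : HasDerivAt (fun r : ℝ => t₀ + r * dt) dt r := by
      simpa using ((hasDerivAt_id r).mul_const dt).const_add t₀
    have hB : HasDerivAt (fun r => (σ r - (t₀ + r * dt))^2)
        (2 * (σ r - (t₀ + r * dt)) * (deriv σ r - dt)) r := by
      have h2 := ((hσr.sub htr).pow 2)
      exact h2.congr_deriv (by simp)
    rw [hid] at hA
    exact hA.unique hB
  -- evaluate the first-order identity at 0
  have hsy : s₀ - t₀ = ‖y₀‖ := by
    have h0 := hst 0
    rw [hσ0, hy0] at h0
    simpa using h0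
  have hcl1 := hmain1.self_of_nhds
  rw [hy0, hσ0] at hcl1
  rw [← hv₀def] at hcl1
  have goal1 : deriv σ 0 * (1 + ⟪n₀, v₀⟫) = dt + ⟪n₀, dx⟫ := by
    have e1 : (⟪y₀, dx - deriv σ 0 • v₀⟫ : ℝ)
        = ‖y₀‖ * (⟪n₀, dx⟫ - deriv σ 0 * ⟪n₀, v₀⟫) := by
      conv_lhs => rw [hy₀n]
      simp [inner_sub_right, real_inner_smul_left, real_inner_smul_right]
      ring
    have e2 : (⟪dx - deriv σ 0 • v₀, y₀⟫ : ℝ)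
        = ‖y₀‖ * (⟪n₀, dx⟫ - deriv σ 0 * ⟪n₀, v₀⟫) := by
      rw [real_inner_comm]; exact e1
    rw [e1, e2] at hcl1
    have h3 : (2:ℝ) * (s₀ - (t₀ + 0 * dt)) * (deriv σ 0 - dt)
        = 2 * ‖y₀‖ * (deriv σ 0 - dt) := by
      rw [show s₀ - (t₀ + 0 * dt) = ‖y₀‖ by rw [← hsy]; ring]
    rw [h3] at hcl1
    have h4 : ⟪n₀, dx⟫ - deriv σ 0 * ⟪n₀, v₀⟫ = deriv σ 0 - dt := by
      have hne : (2:ℝ) * ‖y₀‖ ≠ 0 := mul_ne_zero two_ne_zero hφne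
      apply mul_left_cancel₀ hne
      linarith
    linear_combination -h4
  -- second-order identity
  have hσ0U : σ 0 ∈ U := by rw [hσ0]; exact hs₀U
  have hy'0 : HasDerivAt y (dx - deriv σ 0 • v' (σ 0)) 0 := by
    have hxjr : HasDerivAt (fun r => xj (σ r)) (deriv σ 0 • v' (σ 0)) 0 :=
      (hderiv (σ 0) hσ0U).scomp 0 hσd0
    have h1 : HasDerivAt (fun r : ℝ => x₀ + r • dx) dx 0 := by
      simpa using ((hasDerivAt_id (0:ℝ)).smul_const dx).const_add x₀
    exact h1.sub hxjr
  have hvσ : HasDerivAt (fun r => v' (σ r)) (deriv σ 0 • a' (σ 0)) 0 :=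
    (hderiv2 (σ 0) hσ0U).scomp 0 hσd0
  have hsm := hd'0.smul hvσ
  have hwd := (hasDerivAt_const (0:ℝ) dx).sub hsm
  have hEfd := (hy'0.inner ℝ hwd).add (hwd.inner ℝ hy'0)
  have htr0 : HasDerivAt (fun r : ℝ => t₀ + r * dt) dt 0 := by
    simpa using ((hasDerivAt_id (0:ℝ)).mul_const dt).const_add t₀
  have hEgd := ((hσd0.sub htr0).mul (hd'0.sub_const dt)).const_mul (2:ℝ)
  have heq2 : deriv (fun r => (⟪y r, dx - deriv σ r • v' (σ r)⟫
        + ⟪dx - deriv σ r • v' (σ r), y r⟫ : ℝ)) 0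
      = deriv (fun r => (2:ℝ) * ((σ r - (t₀ + r * dt)) * (deriv σ r - dt))) 0 := by
    apply Filter.EventuallyEq.deriv_eq
    filter_upwards [hmain1] with r hr
    rw [hr]; ring
  have hv1 := hEfd.deriv
  have hv2 := hEgd.deriv
  have hval : (⟪y 0, 0 - (deriv σ 0 • (deriv σ 0 • a' (σ 0)) + deriv (deriv σ) 0 • v' (σ 0))⟫
        + ⟪dx - deriv σ 0 • v' (σ 0), dx - deriv σ 0 • v' (σ 0)⟫
        + (⟪dx - deriv σ 0 • v' (σ 0), dx - deriv σ 0 • v' (σ 0)⟫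
          + ⟪0 - (deriv σ 0 • (deriv σ 0 • a' (σ 0)) + deriv (deriv σ) 0 • v' (σ 0)), y 0⟫) : ℝ)
      = 2 * ((deriv σ 0 - dt) * (deriv σ 0 - dt)
        + (σ 0 - (t₀ + 0 * dt)) * deriv (deriv σ) 0) := by
    have h1 := hv1.symm.trans (heq2.trans hv2)
    convert h1 using 2 <;> (try simp only [Pi.sub_apply, Pi.smul_apply']) <;> try ring
  refine ⟨goal1, ?_⟩
  rw [hy0, hσ0, ← hv₀def, ← ha₀def] at hval
  have hIP2 : (⟪(dx - deriv σ 0 • v₀ : E), dx - deriv σ 0 • v₀⟫ : ℝ)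
      = ‖dx - deriv σ 0 • v₀‖^2 := real_inner_self_eq_norm_sq _
  have hIP1 : (⟪y₀, (0:E) - (deriv σ 0 • (deriv σ 0 • a₀) + deriv (deriv σ) 0 • v₀)⟫ : ℝ)
      = -(‖y₀‖ * (deriv σ 0 * (deriv σ 0 * ⟪n₀, a₀⟫) + deriv (deriv σ) 0 * ⟪n₀, v₀⟫)) := by
    conv_lhs => rw [hy₀n]
    simp [inner_sub_right, inner_add_right, real_inner_smul_left, real_inner_smul_right]
    ring
  have hIP1' : (⟪(0:E) - (deriv σ 0 • (deriv σ 0 • a₀) + deriv (deriv σ) 0 • v₀), y₀⟫ : ℝ)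
      = -(‖y₀‖ * (deriv σ 0 * (deriv σ 0 * ⟪n₀, a₀⟫) + deriv (deriv σ) 0 * ⟪n₀, v₀⟫)) := by
    rw [real_inner_comm]; exact hIP1
  rw [hIP1, hIP1', hIP2] at hval
  rw [show s₀ - (t₀ + 0 * dt) = ‖y₀‖ by rw [← hsy]; ring] at hval
  linear_combination (-1/2 : ℝ) * hval

/-- the wave-type relation for the advanced delay function. -/
theorem stmt_7 (xj : ℝ → EuclideanSpace ℝ (Fin 3))
    (hcont : Continuous xj)
    (hbdd : Bornology.IsBounded (Set.range xj))
    (hsub : ∀ a b : ℝ, a ≠ b → ‖xj a - xj b‖ < |a - b|)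
    (tplus : ℝ → EuclideanSpace ℝ (Fin 3) → ℝ)
    (htp : ∀ t x, tplus t x = t + ‖x - xj (tplus t x)‖)
    (t₀ : ℝ) (x₀ : EuclideanSpace ℝ (Fin 3))
    (hpos : 0 < ‖x₀ - xj (tplus t₀ x₀)‖)
    (v' a' : ℝ → EuclideanSpace ℝ (Fin 3)) (U : Set ℝ)
    (hU : U ∈ nhds (tplus t₀ x₀))
    (hderiv : ∀ s ∈ U, HasDerivAt xj (v' s) s)
    (hderiv2 : ∀ s ∈ U, HasDerivAt v' (a' s) s)
    (hca : ContinuousOn a' U)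
    (hlum : ∀ s ∈ U, ‖v' s‖ < 1)
    (v : EuclideanSpace ℝ (Fin 3)) (hv : v = v' (tplus t₀ x₀))
    (nhat : EuclideanSpace ℝ (Fin 3))
    (hn : nhat = ‖x₀ - xj (tplus t₀ x₀)‖⁻¹ • (x₀ - xj (tplus t₀ x₀))) :
    laplacian3 (fun x => ‖x - xj (tplus t₀ x)‖) x₀
        - deriv (deriv fun t => ‖x₀ - xj (tplus t x₀)‖) t₀
      = 2 / (‖x₀ - xj (tplus t₀ x₀)‖ * (1 + ⟪nhat, v⟫)) := by
  have hS : ContDiffAt ℝ 2 (fun p : ℝ × EuclideanSpace ℝ (Fin 3) => tplus p.1 p.2) (t₀, x₀) :=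
    tplus_contDiffAt xj v' a' U hcont hsub tplus htp t₀ x₀ hpos hU hderiv hderiv2 hca hlum
  have hslice := fun (dt : ℝ) (dx : EuclideanSpace ℝ (Fin 3)) =>
    slice_second_deriv xj v' a' U hcont hsub tplus htp t₀ x₀ hpos hU hderiv hderiv2 hca hlum dt dx
  -- notation
  set φ : ℝ := ‖x₀ - xj (tplus t₀ x₀)‖ with hφdef
  have hφne : φ ≠ 0 := ne_of_gt hpos
  have hnunit : ‖nhat‖ = 1 := by
    rw [hn, norm_smul]
    simp [abs_of_pos hpos]
    field_simp
    rfl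
  -- the Laplacian as sum of slice second derivatives
  have hfeq : (fun x : EuclideanSpace ℝ (Fin 3) => ‖x - xj (tplus t₀ x)‖)
      = fun x => tplus t₀ x - t₀ := by
    funext x; have := htp t₀ x; linarith
  have hw2 : ContDiffAt ℝ 2 (fun x : EuclideanSpace ℝ (Fin 3) => tplus t₀ x) x₀ := by
    have h1 : ContDiffAt ℝ 2
        (fun x : EuclideanSpace ℝ (Fin 3) => ((t₀, x) : ℝ × EuclideanSpace ℝ (Fin 3))) x₀ :=
      contDiffAt_const.prodMk contDiffAt_id
    have h2 : ContDiffAt ℝ 2 ((fun p : ℝ × EuclideanSpace ℝ (Fin 3) => tplus p.1 p.2)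
        ∘ (fun x : EuclideanSpace ℝ (Fin 3) => (t₀, x))) x₀ := ContDiffAt.comp x₀ hS h1
    exact h2
  have hlap : laplacian3 (fun x => ‖x - xj (tplus t₀ x)‖) x₀
      = ∑ i : Fin 3, deriv (deriv fun r : ℝ =>
          tplus (t₀ + r * 0) (x₀ + r • EuclideanSpace.single i 1)) 0 := by
    rw [hfeq]
    unfold laplacian3
    apply Finset.sum_congr rfl
    intro i _
    have h1 : fderiv ℝ (fun x : EuclideanSpace ℝ (Fin 3) => tplus t₀ x - t₀)
        = fderiv ℝ (fun x : EuclideanSpace ℝ (Fin 3) => tplus t₀ x) := by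
      funext x; exact fderiv_sub_const t₀
    rw [h1]
    rw [second_deriv_slice _ x₀ _ hw2]
    have h2 : (fun r : ℝ => tplus t₀ (x₀ + r • EuclideanSpace.single i 1))
        = fun r : ℝ => tplus (t₀ + r * 0) (x₀ + r • EuclideanSpace.single i 1) := by
      funext r; norm_num
    rw [h2]
  -- the time second derivative
  have hteq : (fun t : ℝ => ‖x₀ - xj (tplus t x₀)‖) = fun t => tplus t x₀ - t := by
    funext t; have := htp t x₀; linarith
  have hσt2 : ContDiffAt ℝ 2
      (fun r : ℝ => tplus (t₀ + r * 1) (x₀ + r • (0 : EuclideanSpace ℝ (Fin 3)))) 0 := by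
    have hline : ContDiff ℝ 2 (fun r : ℝ =>
        ((t₀ + r * 1, x₀ + r • (0 : EuclideanSpace ℝ (Fin 3))) : ℝ × EuclideanSpace ℝ (Fin 3))) := by
      refine ContDiff.prodMk ?_ ?_
      · exact contDiff_const.add (contDiff_id.mul contDiff_const)
      · exact contDiff_const.add (ContDiff.smul contDiff_id contDiff_const)
    have hS' : ContDiffAt ℝ 2 (fun p : ℝ × EuclideanSpace ℝ (Fin 3) => tplus p.1 p.2)
        ((fun r : ℝ => ((t₀ + r * 1, x₀ + r • (0 : EuclideanSpace ℝ (Fin 3)))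
          : ℝ × EuclideanSpace ℝ (Fin 3))) 0) := by
      have h0 : (fun r : ℝ => ((t₀ + r * 1, x₀ + r • (0 : EuclideanSpace ℝ (Fin 3)))
          : ℝ × EuclideanSpace ℝ (Fin 3))) 0 = (t₀, x₀) := by simp
      rw [h0]; exact hS
    exact ContDiffAt.comp 0 hS' hline.contDiffAt
  have htime : deriv (deriv fun t : ℝ => ‖x₀ - xj (tplus t x₀)‖) t₀
      = deriv (deriv fun r : ℝ =>
          tplus (t₀ + r * 1) (x₀ + r • (0 : EuclideanSpace ℝ (Fin 3)))) 0 := by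
    rw [hteq]
    have h1 : deriv (deriv fun t : ℝ => tplus t x₀ - t) t₀
        = deriv (deriv fun r : ℝ => tplus (t₀ + r) x₀ - (t₀ + r)) 0 :=
      deriv2_shift (fun t : ℝ => tplus t x₀ - t) t₀
    rw [h1]
    have h2 : (fun r : ℝ => tplus (t₀ + r) x₀ - (t₀ + r))
        = fun r : ℝ => (tplus (t₀ + r * 1) (x₀ + r • (0 : EuclideanSpace ℝ (Fin 3))) - r) - t₀ := by
      funext r; simp; ring
    rw [h2]
    -- local differentiability of σt
    obtain ⟨u, hu, hcd⟩ := hσt2.contDiffOn (m := 2) le_rfl (by simp)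
    obtain ⟨tt, httu, htto, h0tt⟩ := mem_nhds_iff.mp hu
    have hσdiff : ∀ r ∈ tt, HasDerivAt
        (fun r : ℝ => tplus (t₀ + r * 1) (x₀ + r • (0 : EuclideanSpace ℝ (Fin 3))))
        (deriv (fun r : ℝ => tplus (t₀ + r * 1) (x₀ + r • (0 : EuclideanSpace ℝ (Fin 3)))) r)
        r := by
      intro r hr
      have h3 : DifferentiableAt ℝ
          (fun r : ℝ => tplus (t₀ + r * 1) (x₀ + r • (0 : EuclideanSpace ℝ (Fin 3)))) r := by
        have := ((hcd.mono httu) r hr).differentiableWithinAt (by norm_num)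
        exact this.differentiableAt (htto.mem_nhds hr)
      exact h3.hasDerivAt
    have hevd : (deriv fun r : ℝ =>
          (tplus (t₀ + r * 1) (x₀ + r • (0 : EuclideanSpace ℝ (Fin 3))) - r) - t₀)
        =ᶠ[nhds (0:ℝ)] fun r : ℝ => deriv
          (fun r : ℝ => tplus (t₀ + r * 1) (x₀ + r • (0 : EuclideanSpace ℝ (Fin 3)))) r - 1 := by
      filter_upwards [htto.mem_nhds h0tt] with r hr
      exact (((hσdiff r hr).sub (hasDerivAt_id r)).sub_const t₀).deriv
    rw [Filter.EventuallyEq.deriv_eq hevd]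
    exact deriv_sub_const (1:ℝ)
  -- κ is nonzero
  have hs₀U : tplus t₀ x₀ ∈ U := mem_of_mem_nhds hU
  have hκne : (1 + ⟪nhat, v⟫) ≠ 0 := by
    have h1 : |⟪nhat, v⟫| ≤ ‖nhat‖ * ‖v‖ := abs_real_inner_le_norm nhat v
    have h2 : ‖v‖ < 1 := by rw [hv]; exact hlum _ hs₀U
    rw [hnunit, one_mul] at h1
    have := abs_le.mp h1
    intro hc
    linarith
  -- norm expansion lemma
  have hexp : ∀ (c : ℝ) (i : Fin 3),
      ‖EuclideanSpace.single i (1:ℝ) - c • v‖^2 = 1 - 2*(c * (v i)) + c^2*‖v‖^2 := by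
    intro c i
    rw [norm_sub_sq_real]
    rw [EuclideanSpace.norm_single, real_inner_smul_right, EuclideanSpace.inner_single_left]
    rw [norm_smul]
    simp only [mul_pow, sq_abs, Real.norm_eq_abs, conj_trivial, map_one, one_mul, one_pow]
    try ring
  -- spatial slice relations
  have h00 := hslice 0 (EuclideanSpace.single 0 1)
  have h01 := hslice 0 (EuclideanSpace.single 1 1)
  have h02 := hslice 0 (EuclideanSpace.single 2 1)
  have h0t := hslice 1 0
  rw [← hn] at h00 h01 h02 h0t
  rw [← hv] at h00 h01 h02 h0t
  obtain ⟨hF0, hE0⟩ := h00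
  obtain ⟨hF1, hE1⟩ := h01
  obtain ⟨hF2, hE2⟩ := h02
  obtain ⟨hFt, hEt⟩ := h0t
  rw [EuclideanSpace.inner_single_right, zero_add] at hF0 hF1 hF2
  simp only [map_one, one_mul, conj_trivial] at hF0 hF1 hF2
  rw [hexp] at hE0 hE1 hE2
  simp only [sub_zero] at hE0 hE1 hE2
  rw [inner_zero_right, add_zero] at hFt
  rw [show ((0 : EuclideanSpace ℝ (Fin 3))
      - deriv (fun r : ℝ => tplus (t₀ + r * 1) (x₀ + r • (0 : EuclideanSpace ℝ (Fin 3)))) 0 • v)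
    = -(deriv (fun r : ℝ => tplus (t₀ + r * 1) (x₀ + r • (0 : EuclideanSpace ℝ (Fin 3)))) 0 • v)
    by simp] at hEt
  rw [norm_neg, norm_smul] at hEt
  simp only [mul_pow, sq_abs, Real.norm_eq_abs] at hEt
  -- inner product component sums
  have hS1 : nhat 0 * nhat 0 + nhat 1 * nhat 1 + nhat 2 * nhat 2 = 1 := by
    have h1 : (⟪nhat, nhat⟫ : ℝ) = 1 := by
      rw [real_inner_self_eq_norm_sq, hnunit]; norm_num
    rw [PiLp.inner_apply, Fin.sum_univ_three] at h1
    simpa [RCLike.inner_apply, conj_trivial, ← pow_two] using h1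
  have hS2 : nhat 0 * v 0 + nhat 1 * v 1 + nhat 2 * v 2 = ⟪nhat, v⟫ := by
    rw [PiLp.inner_apply, Fin.sum_univ_three]
    simp [RCLike.inner_apply, conj_trivial]
    ring
  -- final assembly
  rw [hlap, htime, Fin.sum_univ_three]
  rw [eq_div_iff (mul_ne_zero hφne hκne)]
  apply mul_right_cancel₀ (pow_ne_zero 2 hκne)
  linear_combination
    ((1 + ⟪nhat, v⟫)^2) * (hE0 + hE1 + hE2) - ((1 + ⟪nhat, v⟫)^2) * hEt
    + (‖v‖^2 - 1 - φ * ⟪nhat, a' (tplus t₀ x₀)⟫) * hS1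
    - 2 * (1 + ⟪nhat, v⟫) * hS2
    + (-2*(1 + ⟪nhat, v⟫)*(v 0)
        + ((deriv (fun r : ℝ => tplus (t₀ + r * 0) (x₀ + r • EuclideanSpace.single 0 1)) 0)
            * (1 + ⟪nhat, v⟫) + nhat 0)
          * (‖v‖^2 - 1 - φ * ⟪nhat, a' (tplus t₀ x₀)⟫)) * hF0
    + (-2*(1 + ⟪nhat, v⟫)*(v 1)
        + ((deriv (fun r : ℝ => tplus (t₀ + r * 0) (x₀ + r • EuclideanSpace.single 1 1)) 0)
            * (1 + ⟪nhat, v⟫) + nhat 1)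
          * (‖v‖^2 - 1 - φ * ⟪nhat, a' (tplus t₀ x₀)⟫)) * hF1
    + (-2*(1 + ⟪nhat, v⟫)*(v 2)
        + ((deriv (fun r : ℝ => tplus (t₀ + r * 0) (x₀ + r • EuclideanSpace.single 2 1)) 0)
            * (1 + ⟪nhat, v⟫) + nhat 2)
          * (‖v‖^2 - 1 - φ * ⟪nhat, a' (tplus t₀ x₀)⟫)) * hF2
    + (2*(1 - (1 + ⟪nhat, v⟫))
        + ((deriv (fun r : ℝ => tplus (t₀ + r * 1) (x₀ + r • (0 : EuclideanSpace ℝ (Fin 3)))) 0)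
            * (1 + ⟪nhat, v⟫) - 1)
        - ((deriv (fun r : ℝ => tplus (t₀ + r * 1) (x₀ + r • (0 : EuclideanSpace ℝ (Fin 3)))) 0)
            * (1 + ⟪nhat, v⟫) + 1) * (‖v‖^2 - φ * ⟪nhat, a' (tplus t₀ x₀)⟫)) * hFt
end

section
/- (Energy-rate lemma.) Let m > 0 and e be real constants, let v : ℝ → ℝ³ be differentiable with ‖v(t)‖ < 1 for all t, and let E, B : ℝ → ℝ³ be maps such that for all t the relativistic equation of motion holds: (m/√(1 − ‖v(t)‖²))·v′(t) = e·( E(t) − ⟪v(t), E(t)⟫·v(t) + v(t) × B(t) ). Then for every t the function s ↦ m/√(1 − ‖v(s)‖²) is differentiable at t with derivative e·⟪v(t), E(t)⟫. -/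
open scoped RealInnerProductSpace

/-- The cross product on Euclidean 3-space. -/
noncomputable def cross3 (a b : EuclideanSpace ℝ (Fin 3)) : EuclideanSpace ℝ (Fin 3) :=
  (WithLp.equiv 2 (Fin 3 → ℝ)).symm
    ![a 1 * b 2 - a 2 * b 1, a 2 * b 0 - a 0 * b 2, a 0 * b 1 - a 1 * b 0]

/-!
Differentiating `γ = 1/√(1 − ‖v‖²)` gives `(m γ)' = m γ ⟪v, v'⟫ / (1 − ‖v‖²)`. Pairing the
equation of motion with `v` kills the magnetic term `v × B` and turns the electric part into
`e ⟪v, E⟫ (1 − ‖v‖²)`, so the factor `1 − ‖v‖²` cancels.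
-/

lemma inner_cross3_self (a b : EuclideanSpace ℝ (Fin 3)) : ⟪a, cross3 a b⟫ = 0 := by
  simp only [cross3, PiLp.inner_apply, RCLike.inner_apply, conj_trivial, Fin.sum_univ_three,
    WithLp.equiv_symm_apply, Matrix.cons_val_zero, Matrix.cons_val_one, Matrix.cons_val]
  ring

lemma inner_sub_inner_smul_self {F : Type*} [NormedAddCommGroup F] [InnerProductSpace ℝ F]
    (v E : F) : ⟪v, E - ⟪v, E⟫ • v⟫ = ⟪v, E⟫ * (1 - ‖v‖ ^ 2) := by
  rw [inner_sub_right, inner_smul_right, real_inner_self_eq_norm_sq]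
  ring

lemma HasDerivAt.div_sqrt_one_sub_norm_sq {F : Type*} [NormedAddCommGroup F]
    [InnerProductSpace ℝ F] {v : ℝ → F} {v' : F} {t : ℝ} (hv : HasDerivAt v v' t)
    (hlt : ‖v t‖ < 1) (m : ℝ) :
    HasDerivAt (fun s => m / Real.sqrt (1 - ‖v s‖ ^ 2))
      (m / Real.sqrt (1 - ‖v t‖ ^ 2) * ⟪v t, v'⟫ / (1 - ‖v t‖ ^ 2)) t := by
  have hpos : 0 < 1 - ‖v t‖ ^ 2 := by nlinarith [norm_nonneg (v t)]
  have hsqrt_pos : 0 < Real.sqrt (1 - ‖v t‖ ^ 2) := Real.sqrt_pos.mpr hpos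
  have hnormsq : HasDerivAt (fun s => 1 - ‖v s‖ ^ 2) (-(2 * ⟪v t, v'⟫)) t := by
    simpa using (hv.norm_sq).const_sub 1
  refine ((hasDerivAt_const t m).div (hnormsq.sqrt hpos.ne') hsqrt_pos.ne').congr_deriv ?_
  field_simp
  rw [Real.sq_sqrt hpos.le]
  ring

theorem stmt_12_general (m e : ℝ)
    (v Ef Bf : ℝ → EuclideanSpace ℝ (Fin 3))
    (hdiff : Differentiable ℝ v)
    (hlum : ∀ t : ℝ, ‖v t‖ < 1)
    (heqm : ∀ t : ℝ,
      (m / Real.sqrt (1 - ‖v t‖ ^ 2)) • deriv v t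
        = e • (Ef t - ⟪v t, Ef t⟫ • v t + cross3 (v t) (Bf t))) :
    ∀ t : ℝ,
      HasDerivAt (fun s => m / Real.sqrt (1 - ‖v s‖ ^ 2)) (e * ⟪v t, Ef t⟫) t := by
  intro t
  have hpos : 0 < 1 - ‖v t‖ ^ 2 := by nlinarith [hlum t, norm_nonneg (v t)]
  have hpower : m / Real.sqrt (1 - ‖v t‖ ^ 2) * ⟪v t, deriv v t⟫
      = e * ⟪v t, Ef t⟫ * (1 - ‖v t‖ ^ 2) := by
    have h := congrArg (⟪v t, ·⟫) (heqm t)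
    simp only [inner_smul_right, inner_add_right, inner_cross3_self, add_zero,
      inner_sub_inner_smul_self] at h
    rw [h, mul_assoc]
  refine ((hdiff t).hasDerivAt.div_sqrt_one_sub_norm_sq (hlum t) m).congr_deriv ?_
  rw [hpower, mul_div_cancel_right₀ _ hpos.ne']

/-- Energy-rate lemma: along a solution of the relativistic
Lorentz-force equation of motion, the relativistic energy `m/√(1 − ‖v‖²)` is
differentiable with derivative `e·⟪v, E⟫`. -/
theorem stmt_12 (m e : ℝ) (hm : 0 < m)
    (v Ef Bf : ℝ → EuclideanSpace ℝ (Fin 3))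
    (hdiff : Differentiable ℝ v)
    (hlum : ∀ t : ℝ, ‖v t‖ < 1)
    (heqm : ∀ t : ℝ,
      (m / Real.sqrt (1 - ‖v t‖ ^ 2)) • deriv v t
        = e • (Ef t - ⟪v t, Ef t⟫ • v t + cross3 (v t) (Bf t))) :
    ∀ t : ℝ,
      HasDerivAt (fun s => m / Real.sqrt (1 - ‖v s‖ ^ 2)) (e * ⟪v t, Ef t⟫) t :=
  stmt_12_general m e v Ef Bf hdiff hlum heqm
end
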